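/- For a pseudo-multiplication ⊙, there exists a positive ⊙-finite element if and only if the left identity 1_⊙ is ⊙-finite. -/

import Mathlib

open Set Filter Topology
open scoped ENNReal

/-- A pseudo-multiplication on `[0,∞]`. -/
structure PseudoMul where
  mul : ℝ≥0∞ → ℝ≥0∞ → ℝ≥0∞
  assoc : ∀ a b c, mul (mul a b) c = mul a (mul b c)
  continuousOn : ContinuousOn (fun p : ℝ≥0∞ × ℝ≥0∞ => mul p.1 p.2) (Ioo 0 ⊤ ×ˢ univ)
  continuousOn_left : ∀ t, ContinuousOn (fun s => mul s t) (Ioi 0)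
  mono : ∀ ⦃a b : ℝ≥0∞⦄, a ≤ b → ∀ ⦃c d : ℝ≥0∞⦄, c ≤ d → mul a c ≤ mul b d
  one : ℝ≥0∞
  one_mul : ∀ t, mul one t = t
  eq_zero_of_mul : ∀ s t, mul s t = 0 → s = 0 ∨ t = 0
  zero_mul : ∀ t, mul 0 t = 0
  mul_zero : ∀ t, mul t 0 = 0

/-- The kernel `O(t) = ⨅_{s>0} s ⊙ t`. -/
noncomputable def PseudoMul.O (P : PseudoMul) (t : ℝ≥0∞) : ℝ≥0∞ :=
  ⨅ s ∈ Ioi (0 : ℝ≥0∞), P.mul s t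

/-!
Associativity and monotonicity give `O(u) ⊙ t ≤ s ⊙ (u ⊙ t)` for every `s > 0`, hence
`O(1_⊙) ⊙ t ≤ O(t)`. If `O(t) = 0` with `t > 0`, the absence of zero divisors forces
`O(1_⊙) = 0`. Conversely `1_⊙` itself is positive, since `0` is an annihilator.
-/

namespace PseudoMul

variable (P : PseudoMul)

theorem one_pos : 0 < P.one := by
  refine pos_iff_ne_zero.mpr fun h => (one_ne_zero : (1 : ℝ≥0∞) ≠ 0) ?_
  calc (1 : ℝ≥0∞) = P.mul P.one 1 := (P.one_mul 1).symm
    _ = 0 := by rw [h, P.zero_mul]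

theorem O_le_mul {s : ℝ≥0∞} (hs : 0 < s) (t : ℝ≥0∞) : P.O t ≤ P.mul s t :=
  biInf_le (fun s => P.mul s t) hs

theorem mul_O_le_O_mul (u t : ℝ≥0∞) : P.mul (P.O u) t ≤ P.O (P.mul u t) :=
  le_iInf₂ fun s hs =>
    calc P.mul (P.O u) t ≤ P.mul (P.mul s u) t := P.mono (P.O_le_mul hs u) le_rfl
      _ = P.mul s (P.mul u t) := P.assoc s u t

theorem mul_O_one_le_O (t : ℝ≥0∞) : P.mul (P.O P.one) t ≤ P.O t := by
  simpa only [P.one_mul] using P.mul_O_le_O_mul P.one t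

theorem O_one_eq_zero_of_O_eq_zero {t : ℝ≥0∞} (ht : 0 < t) (hOt : P.O t = 0) :
    P.O P.one = 0 := by
  have hmul : P.mul (P.O P.one) t = 0 := le_zero_iff.mp (hOt ▸ P.mul_O_one_le_O t)
  exact (P.eq_zero_of_mul _ _ hmul).resolve_right ht.ne'

end PseudoMul

theorem exists_pos_finite_iff (P : PseudoMul) :
    (∃ t : ℝ≥0∞, 0 < t ∧ P.O t = 0) ↔ P.O P.one = 0 :=
  ⟨fun ⟨_, ht, hOt⟩ => P.O_one_eq_zero_of_O_eq_zero ht hOt, fun h => ⟨P.one, P.one_pos, h⟩⟩
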